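/- Let ϱ ∈ (0,1), σ > 0, α ≥ 1, t > 0, and c_n ∈ ℂ with |c_n| ≤ (eσϱ/n)^{n/ϱ} for all n ≥ 1. Then the series ∑_{n=1}^∞ |c_n| · t^{−n} · n! converges. -/

import Mathlib

/-!
Since `m! ≤ m^m`, the `m`-th term is at most `(K^{1/ϱ} m^{1-1/ϱ} / t)^m` with `K = eσϱ`; as `ϱ < 1`
the base tends to `0`, so the terms are eventually dominated by `(1/2)^m` (a root test).
-/

open Real Filter Topology Nat

lemma summable_of_norm_le_pow_of_tendsto_zero {E : Type*} [NormedAddCommGroup E] [CompleteSpace E]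
    {f : ℕ → E} {r : ℕ → ℝ} (hr : Tendsto r atTop (𝓝 0))
    (hf : ∀ᶠ n in atTop, ‖f n‖ ≤ r n ^ n) : Summable f := by
  have hsmall : ∀ᶠ n in atTop, |r n| ≤ 1 / 2 :=
    hr.abs.eventually (ge_mem_nhds (by norm_num : |(0 : ℝ)| < 1 / 2))
  refine (summable_geometric_of_lt_one (by norm_num) (by norm_num : (1 / 2 : ℝ) < 1))
    |>.of_norm_bounded_eventually_nat ?_
  filter_upwards [hf, hsmall] with n hfn hrn
  calc ‖f n‖ ≤ r n ^ n := hfn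
    _ ≤ |r n| ^ n := (le_abs_self _).trans (abs_pow _ _).le
    _ ≤ (1 / 2) ^ n := pow_le_pow_left₀ (abs_nonneg _) hrn n

lemma tendsto_mul_natCast_rpow_atTop_zero (C : ℝ) {a : ℝ} (ha : a < 0) :
    Tendsto (fun m : ℕ => C * (m : ℝ) ^ a) atTop (𝓝 0) := by
  have h := (tendsto_rpow_neg_atTop (neg_pos.2 ha)).comp tendsto_natCast_atTop_atTop
  simpa using h.const_mul C

lemma div_natCast_rpow_mul_rpow_neg_mul_pow {K ϱ t : ℝ} (hK : 0 ≤ K) (ht : 0 < t) {m : ℕ}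
    (hm : 0 < m) :
    (K / m) ^ ((m : ℝ) / ϱ) * t ^ (-(m : ℝ)) * (m : ℝ) ^ m
      = (K ^ ϱ⁻¹ * (m : ℝ) ^ (1 - ϱ⁻¹) / t) ^ m := by
  have hm' : (0 : ℝ) < m := by exact_mod_cast hm
  have h1 : (K / m) ^ ((m : ℝ) / ϱ) = ((K / m) ^ ϱ⁻¹) ^ m := by
    rw [← rpow_natCast, ← rpow_mul (by positivity), div_eq_inv_mul (m : ℝ)]
  have h2 : t ^ (-(m : ℝ)) = t⁻¹ ^ m := by
    rw [rpow_neg ht.le, rpow_natCast, inv_pow]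
  rw [h1, h2, ← mul_pow, ← mul_pow, div_rpow hK hm'.le, rpow_sub hm', rpow_one]
  congr 1
  field_simp

lemma mul_rpow_neg_mul_factorial_le {K ϱ t a : ℝ} (hK : 0 ≤ K) (ht : 0 < t) {m : ℕ} (hm : 0 < m)
    (ha : a ≤ (K / m) ^ ((m : ℝ) / ϱ)) :
    a * t ^ (-(m : ℝ)) * m ! ≤ (K ^ ϱ⁻¹ * (m : ℝ) ^ (1 - ϱ⁻¹) / t) ^ m := by
  rw [← div_natCast_rpow_mul_rpow_neg_mul_pow hK ht hm]
  have hfact : (m ! : ℝ) ≤ (m : ℝ) ^ m := by exact_mod_cast m.factorial_le_pow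
  gcongr

theorem stmt7_general (ϱ σ t : ℝ) (hϱ : ϱ ∈ Set.Ioo 0 1) (hσ : 0 < σ)
    (ht : 0 < t) (c : ℕ → ℂ)
    (hc : ∀ n : ℕ, 1 ≤ n →
      ‖c n‖ ≤ (Real.exp 1 * σ * ϱ / n) ^ ((n : ℝ) / ϱ)) :
    Summable (fun n : ℕ =>
      ‖c (n + 1)‖ * t ^ (-((n : ℝ) + 1)) * (Nat.factorial (n + 1))) := by
  obtain ⟨hϱ0, hϱ1⟩ := hϱ
  have hK : 0 ≤ exp 1 * σ * ϱ := by positivity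
  suffices Summable fun m : ℕ => ‖c m‖ * t ^ (-(m : ℝ)) * (m ! : ℝ) by
    simpa using (summable_nat_add_iff 1).2 this
  have hexponent : 1 - ϱ⁻¹ < 0 := sub_neg.2 ((one_lt_inv₀ hϱ0).2 hϱ1)
  refine summable_of_norm_le_pow_of_tendsto_zero
    (r := fun m => (exp 1 * σ * ϱ) ^ ϱ⁻¹ * (m : ℝ) ^ (1 - ϱ⁻¹) / t)
    (by simpa using (tendsto_mul_natCast_rpow_atTop_zero _ hexponent).div_const t) ?_
  filter_upwards [eventually_ge_atTop 1] with m hm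
  rw [norm_of_nonneg (by positivity)]
  exact mul_rpow_neg_mul_factorial_le hK ht hm (hc m hm)

theorem stmt7 (ϱ σ α t : ℝ) (hϱ : ϱ ∈ Set.Ioo 0 1) (hσ : 0 < σ)
    (hα : 1 ≤ α) (ht : 0 < t) (c : ℕ → ℂ)
    (hc : ∀ n : ℕ, 1 ≤ n →
      ‖c n‖ ≤ (Real.exp 1 * σ * ϱ / n) ^ ((n : ℝ) / ϱ)) :
    Summable (fun n : ℕ =>
      ‖c (n + 1)‖ * t ^ (-((n : ℝ) + 1)) * (Nat.factorial (n + 1))) :=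
  stmt7_general ϱ σ t hϱ hσ ht c hc
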